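/- arXiv:2601.00006 — 10 statements merged into one kernel-verified Lean document; each statement's English description precedes it below -/
import Mathlib

section
/- In A_κ with second largest element e = κ, for every element a: 0 < a ≤ e if and only if a ∨ ¬a = e. -/
/-- In `A_κ = WithTop (Set κ)` (Heyting implication `hi` characterized by
its adjunction), with second largest element `e = Set.univ`, for every `a`:
`⊥ < a ≤ e` if and only if `a ⊔ ¬a = e`, where `¬a = hi a ⊥`. -/
theorem stmt_2 (κ : Type*) (hi : WithTop (Set κ) → WithTop (Set κ) → WithTop (Set κ))
    (adj : ∀ a b c : WithTop (Set κ), c ⊓ a ≤ b ↔ c ≤ hi a b)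
    (a : WithTop (Set κ)) :
    (⊥ < a ∧ a ≤ ((Set.univ : Set κ) : WithTop (Set κ))) ↔
      a ⊔ hi a ⊥ = ((Set.univ : Set κ) : WithTop (Set κ)) := by
  have hspec : ∀ x : WithTop (Set κ), hi x ⊥ ⊓ x ≤ ⊥ :=
    fun x => (adj x ⊥ (hi x ⊥)).mpr le_rfl
  constructor
  · rintro ⟨hpos, hle⟩
    -- a is not ⊤ since a ≤ coe univ
    lift a to Set κ using (hle.trans_lt (WithTop.coe_lt_top _)).ne
    -- hi a ⊥ ≠ ⊤
    have hnt : hi (a : WithTop (Set κ)) ⊥ ≠ ⊤ := by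
      intro h
      have := hspec (a : WithTop (Set κ))
      rw [h, top_inf_eq] at this
      exact hpos.ne' (le_bot_iff.mp this)
    lift hi (a : WithTop (Set κ)) ⊥ to Set κ using hnt with t ht
    -- t ⊆ aᶜ
    have h1 : t ≤ aᶜ := by
      have := hspec (a : WithTop (Set κ))
      rw [← ht, ← WithTop.coe_inf, ← WithTop.coe_bot, WithTop.coe_le_coe] at this
      intro x hx hxc
      exact this ⟨hx, hxc⟩
    -- aᶜ ⊆ t
    have h2 : (aᶜ : Set κ) ≤ t := by
      have : ((aᶜ : Set κ) : WithTop (Set κ)) ≤ hi (a : WithTop (Set κ)) ⊥ := by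
        rw [← adj, ← WithTop.coe_inf, ← WithTop.coe_bot, WithTop.coe_le_coe]
        simp [Set.compl_inter_self, le_refl]
      rw [← ht, WithTop.coe_le_coe] at this
      exact this
    have : t = aᶜ := le_antisymm h1 h2
    rw [this, ← WithTop.coe_sup]
    congr 1
    simp [Set.union_compl_self]
  · intro h
    constructor
    · rw [bot_lt_iff_ne_bot]
      rintro rfl
      have htop : hi (⊥ : WithTop (Set κ)) ⊥ = ⊤ := by
        have : (⊤ : WithTop (Set κ)) ≤ hi ⊥ ⊥ := by
          rw [← adj]; simp
        exact le_antisymm le_top this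
      rw [htop, bot_sup_eq] at h
      exact (WithTop.coe_ne_top h.symm)
    · calc a ≤ a ⊔ hi a ⊥ := le_sup_left
        _ = _ := h
end

section
/- Let B be a subalgebra of A_n (as a Heyting algebra, hence closed under 0, 1, ∧, ∨, →). Then every element a of B with a ≠ 1 is the join (in B, equivalently in A_n) of the atoms of B that lie below a. -/
/-!
Let `j` be the join of the atoms of `B` below `a`; it lies in `B`. If `j < a`, then
`d = a ⊓ ¬j ∈ B` is nonzero, because every element of `A_n` other than the top of `P(n)` and
the new top is regular (`¬¬j = j`: below the new top, negation is set complement). An atom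
of `B` below `d` then lies below both `j` and `¬j`, which is absurd.
-/

section HeytingSubalgebra

variable {α : Type*}

def atomsBelow [PartialOrder α] [OrderBot α] (S : Set α) (a : α) : Set α :=
  {b | b ∈ S ∧ b ≠ ⊥ ∧ (∀ c ∈ S, c < b → c = ⊥) ∧ b ≤ a}

theorem exists_mem_atomsBelow [PartialOrder α] [OrderBot α] [WellFoundedLT α] {S : Set α}
    {d : α} (hdS : d ∈ S) (hd : d ≠ ⊥) : ∃ b, b ∈ atomsBelow S d := by
  obtain ⟨b, ⟨hbS, hb, hbd⟩, hmin⟩ :=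
    wellFounded_lt.has_min {x | x ∈ S ∧ x ≠ ⊥ ∧ x ≤ d} ⟨d, hdS, hd, le_rfl⟩
  refine ⟨b, hbS, hb, fun c hcS hcb => ?_, hbd⟩
  by_contra hc
  exact hmin c ⟨hcS, hc, hcb.le.trans hbd⟩ hcb

theorem eq_sSup_atomsBelow_of_regular [CompleteLattice α] [Finite α] (hi : α → α → α)
    (adj : ∀ a b c : α, c ⊓ a ≤ b ↔ c ≤ hi a b) {S : Set α} (hbot : ⊥ ∈ S)
    (hinf : ∀ a ∈ S, ∀ b ∈ S, a ⊓ b ∈ S) (hsup : SupClosed S)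
    (hhi : ∀ a ∈ S, ∀ b ∈ S, hi a b ∈ S) {a : α} (haS : a ∈ S)
    (hreg : ∀ j < a, hi (hi j ⊥) ⊥ ≤ j) :
    a = sSup (atomsBelow S a) := by
  set j := sSup (atomsBelow S a)
  have hjS : j ∈ S := hsup.sSup_mem (Set.toFinite _) hbot fun b hb => hb.1
  have hja : j ≤ a := sSup_le fun b hb => hb.2.2.2
  refine (hja.lt_or_eq.resolve_left fun hlt => ?_).symm
  have hd : a ⊓ hi j ⊥ ≠ ⊥ := fun hd =>
    hlt.not_ge (((adj _ _ _).mp hd.le).trans (hreg j hlt))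
  obtain ⟨b, hbS, hb, hbat, hbd⟩ :=
    exists_mem_atomsBelow (hinf _ haS _ (hhi _ hjS _ hbot)) hd
  have hbj : b ≤ j := le_sSup ⟨hbS, hb, hbat, hbd.trans inf_le_left⟩
  have hbj_bot : b ⊓ j ≤ ⊥ := (adj _ _ _).mpr (hbd.trans inf_le_right)
  exact hb (le_bot_iff.mp (inf_eq_left.mpr hbj ▸ hbj_bot))

end HeytingSubalgebra

theorem WithTop.coe_regular_of_ne_top {β : Type*} [BooleanAlgebra β]
    (hi : WithTop β → WithTop β → WithTop β)
    (adj : ∀ a b c : WithTop β, c ⊓ a ≤ b ↔ c ≤ hi a b) {s : β} (hs : s ≠ ⊤) :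
    hi (hi s ⊥) ⊥ ≤ s := by
  set r := hi (hi s ⊥) ⊥
  have hcompl : ((sᶜ : β) : WithTop β) ≤ hi s ⊥ := by
    rw [← adj, ← WithTop.coe_inf, compl_inf_self, WithTop.coe_bot]
  have hr : r ⊓ (sᶜ : β) = ⊥ :=
    le_bot_iff.mp (((adj _ _ _).mpr le_rfl).trans' (inf_le_inf_left r hcompl))
  clear_value r
  induction r using WithTop.recTopCoe with
  | top => simp [compl_eq_bot, hs] at hr
  | coe t =>
    rw [← WithTop.coe_inf, ← WithTop.coe_bot, WithTop.coe_inj, ← disjoint_iff,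
      disjoint_compl_right_iff] at hr
    exact WithTop.coe_le_coe.mpr hr

theorem stmt_5_general (n : ℕ)
    (hi : WithTop (Set (Fin n)) → WithTop (Set (Fin n)) → WithTop (Set (Fin n)))
    (adj : ∀ a b c : WithTop (Set (Fin n)), c ⊓ a ≤ b ↔ c ≤ hi a b)
    (S : Set (WithTop (Set (Fin n))))
    (hbot : ⊥ ∈ S)
    (hinf : ∀ a ∈ S, ∀ b ∈ S, a ⊓ b ∈ S)
    (hsup : ∀ a ∈ S, ∀ b ∈ S, a ⊔ b ∈ S)
    (hhi : ∀ a ∈ S, ∀ b ∈ S, hi a b ∈ S) :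
    ∀ a ∈ S, a ≠ ⊤ →
      a = sSup {b | b ∈ S ∧ b ≠ ⊥ ∧ (∀ c ∈ S, c < b → c = ⊥) ∧ b ≤ a} := by
  intro a haS haT
  refine eq_sSup_atomsBelow_of_regular hi adj hbot hinf hsup hhi haS fun j hja => ?_
  obtain ⟨s, rfl⟩ := WithTop.ne_top_iff_exists.mp (hja.trans_le le_top).ne
  obtain ⟨t, rfl⟩ := WithTop.ne_top_iff_exists.mp haT
  exact WithTop.coe_regular_of_ne_top hi adj (WithTop.coe_lt_coe.mp hja).ne_top

/-- Let `B` (here the set `S`) be a Heyting subalgebra of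
`A_n = WithTop (Set (Fin n))` (closed under `⊥`, `⊤`, `⊓`, `⊔` and the Heyting
implication `hi`, characterized by its adjunction). Then every `a ∈ S` with `a ≠ ⊤`
is the join of the atoms of `S` that lie below `a`. -/
theorem stmt_5 (n : ℕ)
    (hi : WithTop (Set (Fin n)) → WithTop (Set (Fin n)) → WithTop (Set (Fin n)))
    (adj : ∀ a b c : WithTop (Set (Fin n)), c ⊓ a ≤ b ↔ c ≤ hi a b)
    (S : Set (WithTop (Set (Fin n))))
    (hbot : ⊥ ∈ S) (htop : ⊤ ∈ S)
    (hinf : ∀ a ∈ S, ∀ b ∈ S, a ⊓ b ∈ S)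
    (hsup : ∀ a ∈ S, ∀ b ∈ S, a ⊔ b ∈ S)
    (hhi : ∀ a ∈ S, ∀ b ∈ S, hi a b ∈ S) :
    ∀ a ∈ S, a ≠ ⊤ →
      a = sSup {b | b ∈ S ∧ b ≠ ⊥ ∧ (∀ c ∈ S, c < b → c = ⊥) ∧ b ≤ a} :=
  stmt_5_general n hi adj S hbot hinf hsup hhi
end

section
/- Let C_8 be the 8-element linearly ordered Heyting algebra 0 < a_1 < ⋯ < a_6 < 1, and let A be its expansion by a constant a_5, binary operations +, *, and unary operations □, ◇ as specified. Then the subalgebra of A generated by the empty set has universe A \ {a_4}; in particular the only subalgebras of A are A itself and A \ {a_4}. -/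
/- The 8-element chain Heyting algebra `C₈ = Fin 8` (with `0 = 0`, `aᵢ = i`, `1 = 7`),
expanded to the algebra `A` by the constant `a₅ = 5`, binary operations `+`, `*`,
and unary operations `□`, `◇`. -/

/-- Heyting implication of the chain `Fin 8`. -/
def himp8 (x y : Fin 8) : Fin 8 := if x ≤ y then 7 else y

/-- The operation `+` of `A`. -/
def plus8 (x y : Fin 8) : Fin 8 :=
  if x = 0 ∧ (y = 6 ∨ y = 7) then 6
  else if x = 0 ∧ y = 3 then 5
  else if x ≠ 0 ∧ y = 1 then 1
  else 2

/-- The operation `*` of `A`. -/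
def star8 (x y : Fin 8) : Fin 8 := if x = 4 ∧ y = 6 then 7 else 0

/-- The operation `□` of `A`. -/
def box8 (x : Fin 8) : Fin 8 := if x = 5 then 7 else 0

/-- The operation `◇` of `A`. -/
def dia8 (x : Fin 8) : Fin 8 :=
  if x = 0 ∨ x = 6 ∨ x = 7 then 7
  else if x = 1 ∨ x = 2 then 1
  else if x = 3 ∨ x = 5 then 3
  else 5

/-- `S` is (the universe of) a subalgebra of `A`: it contains the constants
`0`, `1 = 7`, `a₅ = 5` and is closed under all operations of `A`. -/
def IsSub8 (S : Set (Fin 8)) : Prop :=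
  (0 : Fin 8) ∈ S ∧ (7 : Fin 8) ∈ S ∧ (5 : Fin 8) ∈ S ∧
  (∀ x ∈ S, ∀ y ∈ S, min x y ∈ S ∧ max x y ∈ S ∧ himp8 x y ∈ S ∧
    plus8 x y ∈ S ∧ star8 x y ∈ S) ∧
  (∀ x ∈ S, box8 x ∈ S ∧ dia8 x ∈ S)

lemma sub8_contains {S : Set (Fin 8)} (h : IsSub8 S) : ∀ x : Fin 8, x ≠ 4 → x ∈ S := by
  obtain ⟨h0, h7, h5, hbin, hun⟩ := h
  have h3 : (3 : Fin 8) ∈ S := by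
    have := (hun 5 h5).2
    simpa [dia8] using this
  have h6 : (6 : Fin 8) ∈ S := by
    have := (hbin 0 h0 7 h7).2.2.2.1
    simpa [plus8] using this
  have h2 : (2 : Fin 8) ∈ S := by
    have := (hbin 5 h5 5 h5).2.2.2.1
    simpa [plus8] using this
  have h1 : (1 : Fin 8) ∈ S := by
    have := (hun 2 h2).2
    simpa [dia8] using this
  intro x hx
  fin_cases x <;> simp_all

/-- The subalgebra of `A` generated by `∅` has universe `A \ {a₄}`;
in particular the only subalgebras of `A` are `A` itself and `A \ {a₄}`. -/
theorem stmt_10 :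
    IsSub8 {x : Fin 8 | x ≠ 4} ∧
    ∀ S : Set (Fin 8), IsSub8 S → S = Set.univ ∨ S = {x : Fin 8 | x ≠ 4} := by
  constructor
  · unfold IsSub8 himp8 plus8 star8 box8 dia8
    decide
  · intro S hS
    by_cases h4 : (4 : Fin 8) ∈ S
    · left
      ext x
      simp only [Set.mem_univ, iff_true]
      by_cases hx : x = 4
      · exact hx ▸ h4
      · exact sub8_contains hS x hx
    · right
      ext x
      constructor
      · intro hx hx4
        exact h4 (hx4 ▸ hx)
      · intro hx
        exact sub8_contains hS x hx
end

section
/- The algebra A (the 8-element chain Heyting algebra expanded with a_5, +, *, □, ◇) is simple: its only congruences are the identity and the total relation. In particular, any congruence containing the pair (a_6, 1) is the total relation, since (1, 0) = (a_4 * a_6, a_4 * 1) then belongs to it. -/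
/-- `θ` is a congruence of `A`: an equivalence relation compatible with all
operations of `A`. -/
def IsCong8 (θ : Fin 8 → Fin 8 → Prop) : Prop :=
  Equivalence θ ∧
  (∀ x y x' y', θ x x' → θ y y' →
    θ (min x y) (min x' y') ∧ θ (max x y) (max x' y') ∧
    θ (himp8 x y) (himp8 x' y') ∧ θ (plus8 x y) (plus8 x' y') ∧
    θ (star8 x y) (star8 x' y')) ∧
  (∀ x x', θ x x' → θ (box8 x) (box8 x') ∧ θ (dia8 x) (dia8 x'))

/-- From `θ 6 7`, the congruence is total. -/
lemma cong8_total (θ : Fin 8 → Fin 8 → Prop) (hθ : IsCong8 θ) (h67 : θ 6 7) :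
    ∀ x y, θ x y := by
  obtain ⟨h1, h2, _⟩ := hθ
  -- θ 7 0 via star
  have h70 : θ 7 0 := by
    have := (h2 4 6 4 7 (h1.refl 4) h67).2.2.2.2
    have e1 : star8 4 6 = 7 := rfl
    have e2 : star8 4 7 = 0 := rfl
    rwa [e1, e2] at this
  have hz0 : ∀ z : Fin 8, θ z 0 := by
    intro z
    have := (h2 z 7 z 0 (h1.refl z) h70).1
    have e1 : min z 7 = z := min_eq_left (Fin.le_last z)
    have e2 : min z 0 = (0 : Fin 8) := min_eq_right (Fin.zero_le z)
    rwa [e1, e2] at this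
  exact fun x y => h1.trans (hz0 x) (h1.symm (hz0 y))

/-- From any `θ x y` with `x < y`, we get `θ 6 7`. -/
lemma cong8_of_lt (θ : Fin 8 → Fin 8 → Prop) (hθ : IsCong8 θ)
    {x y : Fin 8} (hlt : x < y) (hxy : θ x y) : θ 6 7 := by
  obtain ⟨h1, h2, _⟩ := hθ
  have hx7 : θ x 7 := by
    have := (h2 y x x x (h1.symm hxy) (h1.refl x)).2.2.1
    have e1 : himp8 y x = x := by
      unfold himp8; rw [if_neg (not_le.mpr hlt)]
    have e2 : himp8 x x = 7 := by
      unfold himp8; rw [if_pos le_rfl]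
    rwa [e1, e2] at this
  have hx6 : x ≤ 6 := by
    have hy7 : y ≤ 7 := Fin.le_last y
    have : x.val < y.val := hlt
    have : y.val ≤ 7 := hy7
    show x.val ≤ 6
    omega
  have hx6' : θ x 6 := by
    have := (h2 x 6 7 6 hx7 (h1.refl 6)).1
    have e1 : min x 6 = x := min_eq_left hx6
    have e2 : min (7 : Fin 8) 6 = 6 := rfl
    rwa [e1, e2] at this
  exact h1.trans (h1.symm hx6') hx7

/-- The algebra `A` is simple: its only congruences are the identity
and the total relation. In particular, any congruence containing the pair
`(a₆, 1)` is the total relation. -/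
theorem stmt_11 :
    (∀ θ : Fin 8 → Fin 8 → Prop, IsCong8 θ →
      (∀ x y, θ x y ↔ x = y) ∨ (∀ x y, θ x y)) ∧
    (∀ θ : Fin 8 → Fin 8 → Prop, IsCong8 θ → θ 6 7 → ∀ x y, θ x y) := by
  constructor
  · intro θ hθ
    by_cases h : ∀ x y : Fin 8, θ x y → x = y
    · left
      intro x y
      constructor
      · exact h x y
      · rintro rfl; exact hθ.1.refl x
    · right
      push_neg at h
      obtain ⟨x, y, hxy, hne⟩ := h
      rcases lt_or_gt_of_ne hne with hlt | hgt
      · exact cong8_total θ hθ (cong8_of_lt θ hθ hlt hxy)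
      · exact cong8_total θ hθ (cong8_of_lt θ hθ hgt (hθ.1.symm hxy))
  · exact cong8_total
end

section
/- Let A' be the subalgebra of A with universe A \ {a_4}. The relation θ = id ∪ {(a_6, 1), (1, a_6)} is a congruence of A', and up to isomorphism the only nontrivial homomorphic images of A' are A' itself and A'/θ. -/
/-- The universe of the subalgebra `A' = A \ {a₄}`. -/
def S8 : Set (Fin 8) := {x : Fin 8 | x ≠ 4}

/-- `θ` is a congruence of the subalgebra of `A` with universe `S`:
an equivalence relation on `S` compatible with all operations of `A`. -/
def IsCongOn8 (S : Set (Fin 8)) (θ : Fin 8 → Fin 8 → Prop) : Prop :=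
  (∀ x ∈ S, θ x x) ∧
  (∀ x ∈ S, ∀ y ∈ S, θ x y → θ y x) ∧
  (∀ x ∈ S, ∀ y ∈ S, ∀ z ∈ S, θ x y → θ y z → θ x z) ∧
  (∀ x ∈ S, ∀ y ∈ S, ∀ x' ∈ S, ∀ y' ∈ S, θ x x' → θ y y' →
    θ (min x y) (min x' y') ∧ θ (max x y) (max x' y') ∧
    θ (himp8 x y) (himp8 x' y') ∧ θ (plus8 x y) (plus8 x' y') ∧
    θ (star8 x y) (star8 x' y')) ∧
  (∀ x ∈ S, ∀ x' ∈ S, θ x x' → θ (box8 x) (box8 x') ∧ θ (dia8 x) (dia8 x'))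

/-- The relation `θ = id ∪ {(a₆, 1), (1, a₆)}` on `A \ {a₄}`. -/
def theta8 (x y : Fin 8) : Prop := x = y ∨ (x = 6 ∧ y = 7) ∨ (x = 7 ∧ y = 6)

section Aux

instance (x : Fin 8) : Decidable (x ∈ S8) := decidable_of_iff (x ≠ 4) Iff.rfl
instance (x y : Fin 8) : Decidable (theta8 x y) := by unfold theta8; infer_instance

variable {φ : Fin 8 → Fin 8 → Prop}

lemma tot07 (h : IsCongOn8 S8 φ) (h07 : φ 0 7) : ∀ x ∈ S8, ∀ y ∈ S8, φ x y := by
  obtain ⟨hr, hs, ht, h2, _⟩ := h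
  have hmin0 : ∀ y : Fin 8, min (0:Fin 8) y = 0 := by decide
  have hmin7 : ∀ y : Fin 8, min (7:Fin 8) y = y := by decide
  have key : ∀ y ∈ S8, φ 0 y := by
    intro y hy
    have := (h2 0 (by decide) y hy 7 (by decide) y hy h07 (hr y hy)).1
    rwa [hmin0, hmin7] at this
  intro x hx y hy
  exact ht x hx 0 (by decide) y hy (hs 0 (by decide) x hx (key x hx)) (key y hy)

lemma tot56 (h : IsCongOn8 S8 φ) (h56 : φ 5 6) : ∀ x ∈ S8, ∀ y ∈ S8, φ x y := by
  have hs := h.2.1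
  have h70 : φ 7 0 := by
    have := (h.2.2.2.2 5 (by decide) 6 (by decide) h56).1
    simpa [box8] using this
  exact tot07 h (hs 7 (by decide) 0 (by decide) h70)

lemma tot57 (h : IsCongOn8 S8 φ) (h57 : φ 5 7) : ∀ x ∈ S8, ∀ y ∈ S8, φ x y := by
  have hs := h.2.1
  have h70 : φ 7 0 := by
    have := (h.2.2.2.2 5 (by decide) 7 (by decide) h57).1
    simpa [box8] using this
  exact tot07 h (hs 7 (by decide) 0 (by decide) h70)

lemma tot37 (h : IsCongOn8 S8 φ) (h37 : φ 3 7) : ∀ x ∈ S8, ∀ y ∈ S8, φ x y := by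
  have h56 : φ 5 6 := by
    have := (h.2.2.2.1 0 (by decide) 3 (by decide) 0 (by decide) 7 (by decide)
      (h.1 0 (by decide)) h37).2.2.2.1
    simpa [plus8] using this
  exact tot56 h h56

lemma tot17 (h : IsCongOn8 S8 φ) (h17 : φ 1 7) : ∀ x ∈ S8, ∀ y ∈ S8, φ x y := by
  have h73 : φ 7 3 := by
    have := (h.2.2.2.1 1 (by decide) 3 (by decide) 7 (by decide) 3 (by decide)
      h17 (h.1 3 (by decide))).2.2.1
    simpa [himp8] using this
  exact tot37 h (h.2.1 7 (by decide) 3 (by decide) h73)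

lemma tot27 (h : IsCongOn8 S8 φ) (h27 : φ 2 7) : ∀ x ∈ S8, ∀ y ∈ S8, φ x y := by
  have h17 : φ 1 7 := by
    have := (h.2.2.2.2 2 (by decide) 7 (by decide) h27).2
    simpa [dia8] using this
  exact tot17 h h17

lemma key2 (h : IsCongOn8 S8 φ) (a : Fin 8) (ha : a ∈ S8) (ha6 : a ≠ 6) (ha7 : a ≠ 7)
    (h7 : φ a 7) : ∀ x ∈ S8, ∀ y ∈ S8, φ x y := by
  fin_cases a
  · exact tot07 h h7
  · exact tot17 h h7
  · exact tot27 h h7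
  · exact tot37 h h7
  · exact absurd rfl ha
  · exact tot57 h h7
  · exact absurd rfl ha6
  · exact absurd rfl ha7

lemma pair7 (h : IsCongOn8 S8 φ) {a b : Fin 8} (ha : a ∈ S8) (hb : b ∈ S8)
    (hlt : a < b) (hab : φ a b) : φ a 7 := by
  have := (h.2.2.2.1 b hb a ha b hb b hb (h.1 b hb) hab).2.2.1
  rwa [show himp8 b a = a from by simp [himp8, not_le.mpr hlt],
       show himp8 b b = 7 from by simp [himp8]] at this

lemma keyLT (h : IsCongOn8 S8 φ) {a b : Fin 8} (ha : a ∈ S8) (hb : b ∈ S8)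
    (hlt : a < b) (hab : φ a b) (hn : ¬ theta8 a b) : ∀ x ∈ S8, ∀ y ∈ S8, φ x y := by
  have ha7 := pair7 h ha hb hlt hab
  have ha6 : a ≠ 6 := by
    rintro rfl
    have hb7 : b = 7 := by revert hlt; fin_cases b <;> decide
    subst hb7
    exact hn (Or.inr (Or.inl ⟨rfl, rfl⟩))
  have ha7' : a ≠ 7 := by rintro rfl; revert hlt; fin_cases b <;> decide
  exact key2 h a ha ha6 ha7' ha7

lemma thsymm {x y : Fin 8} (h : theta8 x y) : theta8 y x := by
  rcases h with rfl | ⟨rfl, rfl⟩ | ⟨rfl, rfl⟩ <;> simp [theta8]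

lemma keyL (h : IsCongOn8 S8 φ) {a b : Fin 8} (ha : a ∈ S8) (hb : b ∈ S8)
    (hab : φ a b) (hn : ¬ theta8 a b) : ∀ x ∈ S8, ∀ y ∈ S8, φ x y := by
  rcases lt_trichotomy a b with hlt | heq | hgt
  · exact keyLT h ha hb hlt hab hn
  · exact absurd (Or.inl heq) hn
  · exact keyLT h hb ha hgt (h.2.1 a ha b hb hab) (fun t => hn (thsymm t))

end Aux

/-- `θ = id ∪ {(a₆, 1), (1, a₆)}` is a congruence of the subalgebra
`A' = A \ {a₄}` of `A`, and, up to isomorphism, the only nontrivial homomorphic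
images of `A'` are `A'` itself and `A'/θ`: every congruence `φ` of `A'` agrees on
`A'` with the identity, with `θ`, or with the total relation. -/
theorem stmt_12 :
    IsCongOn8 S8 theta8 ∧
    ∀ φ : Fin 8 → Fin 8 → Prop, IsCongOn8 S8 φ →
      (∀ x ∈ S8, ∀ y ∈ S8, φ x y ↔ x = y) ∨
      (∀ x ∈ S8, ∀ y ∈ S8, φ x y ↔ theta8 x y) ∨
      (∀ x ∈ S8, ∀ y ∈ S8, φ x y) := by
  constructor
  · exact ⟨by decide, by decide, by decide, by decide, by decide⟩
  intro φ hφ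
  by_cases hid : ∀ x ∈ S8, ∀ y ∈ S8, φ x y → x = y
  · left
    intro x hx y hy
    exact ⟨hid x hx y hy, fun h => h ▸ hφ.1 x hx⟩
  by_cases hth : ∀ x ∈ S8, ∀ y ∈ S8, φ x y → theta8 x y
  · right; left
    push_neg at hid
    obtain ⟨a, ha, b, hb, hab, hne⟩ := hid
    have h67 : φ 6 7 := by
      rcases hth a ha b hb hab with rfl | ⟨rfl, rfl⟩ | ⟨rfl, rfl⟩
      · exact absurd rfl hne
      · exact hab
      · exact hφ.2.1 7 ha 6 hb hab
    intro x hx y hy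
    refine ⟨hth x hx y hy, fun ht => ?_⟩
    rcases ht with rfl | ⟨rfl, rfl⟩ | ⟨rfl, rfl⟩
    · exact hφ.1 x hx
    · exact h67
    · exact hφ.2.1 6 (by decide) 7 (by decide) h67
  · right; right
    push_neg at hth
    obtain ⟨a, ha, b, hb, hab, hn⟩ := hth
    exact keyL hφ ha hb hab hn
end

section
/- In the algebra A (the expanded 8-element chain), the formula φ(x, y) = ∃z (x + y = ◇z) defines a total function f on A given by f(a) = a_3 if a = 0 and f(a) = a_1 if a ≠ 0; that is, for every a there is a unique b with A ⊨ ∃z (a + b = ◇z), namely this b. -/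
/-- In `A`, the formula `φ(x, y) = ∃z (x + y = ◇z)` defines a total
function `f` with `f(a) = a₃` if `a = 0` and `f(a) = a₁` otherwise: for every `a`
the unique `b` with `∃ z, a + b = ◇z` is `if a = 0 then a₃ else a₁`. -/
theorem stmt_13 :
    ∀ a b : Fin 8, (∃ z : Fin 8, plus8 a b = dia8 z) ↔
      b = (if a = 0 then (3 : Fin 8) else 1) := by
  decide
end

section
/- In the quotient B = (A \ {a_4})/θ, where θ glues a_6 with 1, the formula φ(x, y) = ∃z (x + y = ◇z) defines a total function: for a/θ with a = 0 the unique witness is a_6/θ (= 1/θ), and for a ≠ 0 the unique witness is a_1/θ. -/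
/-- In the quotient `B = (A \ {a₄})/θ`, where `θ` glues `a₆` with `1`,
the formula `φ(x, y) = ∃z (x + y = ◇z)` defines a total function: for `a/θ` with
`a = 0` the unique witness class is `a₆/θ (= 1/θ)`, and for `a ≠ 0` it is `a₁/θ`.
Stated on representatives: for `a, b ∈ A \ {a₄}`, `B ⊨ φ(a/θ, b/θ)` (i.e. there is
`c ∈ A \ {a₄}` with `a + b` θ-related to `◇c`) iff `b` is θ-related to
`a₆` (when `a = 0`) resp. `a₁` (when `a ≠ 0`). -/
theorem stmt_14 :
    ∀ a ∈ S8, ∀ b ∈ S8,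
      (∃ c ∈ S8, theta8 (plus8 a b) (dia8 c)) ↔
        theta8 b (if a = 0 then (6 : Fin 8) else 1) := by
  simp only [S8, theta8, Set.mem_setOf_eq]
  decide
end

section
/- Let n ≥ 3 and 1 ≤ k ≤ n − 1. In the Heyting algebra A_n with second largest element e, define f_{k,n}(a) = 1 if a ∈ {0, e, 1}, f_{k,n}(a) = 1 if 0 < a < e and a has at most k atoms below it, and f_{k,n}(a) = e if 0 < a < e and a has at least k + 1 atoms below it. Then f_{k,n} is preserved by every automorphism of A_n. -/
open Classical in
/-- The implicit operation `f_{k,n}` on `A_n = WithTop (Set (Fin n))`: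
`f a = ⊤` if `a ∈ {⊥, e, ⊤}`; `f a = ⊤` if `⊥ < a < e` and at most `k` atoms lie
below `a`; and `f a = e` if `⊥ < a < e` and at least `k + 1` atoms lie below `a`,
where `e = Set.univ` is the second largest element. -/
noncomputable def fkn (n k : ℕ) (a : WithTop (Set (Fin n))) : WithTop (Set (Fin n)) :=
  if a = ⊥ ∨ a = ((Set.univ : Set (Fin n)) : WithTop (Set (Fin n))) ∨ a = ⊤ then ⊤
  else if {b : WithTop (Set (Fin n)) | IsAtom b ∧ b ≤ a}.ncard ≤ k then ⊤
  else ((Set.univ : Set (Fin n)) : WithTop (Set (Fin n)))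


open Classical in
lemma aux_coatom_unique (n : ℕ) (c : WithTop (Set (Fin n))) (hc : IsCoatom c) :
    c = ((Set.univ : Set (Fin n)) : WithTop (Set (Fin n))) := by
  obtain ⟨s, rfl⟩ := WithTop.ne_top_iff_exists.mp hc.1
  by_contra h
  have hlt : (s : WithTop (Set (Fin n))) < ((Set.univ : Set (Fin n)) : WithTop (Set (Fin n))) := by
    refine lt_of_le_of_ne ?_ h
    exact WithTop.coe_le_coe.mpr (Set.subset_univ s)
  exact WithTop.coe_ne_top (hc.2 _ hlt)

open Classical in
lemma aux_coatom_e (n : ℕ) :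
    IsCoatom ((Set.univ : Set (Fin n)) : WithTop (Set (Fin n))) := by
  constructor
  · exact WithTop.coe_ne_top
  · intro b hb
    by_contra h
    obtain ⟨s, rfl⟩ := WithTop.ne_top_iff_exists.mp h
    have := WithTop.coe_lt_coe.mp hb
    exact absurd (Set.subset_univ s) (not_le_of_gt this)

open Classical in
lemma aux_g_e (n : ℕ) (g : WithTop (Set (Fin n)) ≃o WithTop (Set (Fin n))) :
    g ((Set.univ : Set (Fin n)) : WithTop (Set (Fin n))) =
      ((Set.univ : Set (Fin n)) : WithTop (Set (Fin n))) := by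
  apply aux_coatom_unique
  exact (OrderIso.isCoatom_iff g _).mpr (aux_coatom_e n)


/-- For `n ≥ 3` and `1 ≤ k ≤ n - 1`, the function `f_{k,n}` is
preserved by every automorphism of `A_n` (an automorphism of the Heyting algebra
`A_n` is the same thing as an order automorphism). -/
theorem stmt_15 (n k : ℕ) (hn : 3 ≤ n) (hk1 : 1 ≤ k) (hk2 : k ≤ n - 1)
    (g : WithTop (Set (Fin n)) ≃o WithTop (Set (Fin n)))
    (a : WithTop (Set (Fin n))) :
    g (fkn n k a) = fkn n k (g a) := by
  have he := aux_g_e n g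
  have hbot : g ⊥ = ⊥ := g.map_bot
  have htop : g ⊤ = ⊤ := g.map_top
  have e1 : g a = ⊥ ↔ a = ⊥ := ⟨fun h => g.injective (h.trans hbot.symm), fun h => h ▸ hbot⟩
  have e2 : g a = ((Set.univ : Set (Fin n)) : WithTop (Set (Fin n))) ↔
      a = ((Set.univ : Set (Fin n)) : WithTop (Set (Fin n))) :=
    ⟨fun h => g.injective (h.trans he.symm), fun h => h ▸ he⟩
  have e3 : g a = ⊤ ↔ a = ⊤ := ⟨fun h => g.injective (h.trans htop.symm), fun h => h ▸ htop⟩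
  have hcond : (g a = ⊥ ∨ g a = ((Set.univ : Set (Fin n)) : WithTop (Set (Fin n))) ∨ g a = ⊤)
      ↔ (a = ⊥ ∨ a = ((Set.univ : Set (Fin n)) : WithTop (Set (Fin n))) ∨ a = ⊤) :=
    or_congr e1 (or_congr e2 e3)
  have hset : {b : WithTop (Set (Fin n)) | IsAtom b ∧ b ≤ g a}
      = g '' {b : WithTop (Set (Fin n)) | IsAtom b ∧ b ≤ a} := by
    ext b
    constructor
    · rintro ⟨hb, hle⟩
      refine ⟨g.symm b, ⟨?_, ?_⟩, g.apply_symm_apply b⟩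
      · have : IsAtom (g (g.symm b)) ↔ IsAtom (g.symm b) := OrderIso.isAtom_iff g _
        rw [g.apply_symm_apply] at this
        exact this.mp hb
      · exact g.symm_apply_le.mpr hle
    · rintro ⟨c, ⟨hc, hca⟩, rfl⟩
      exact ⟨(OrderIso.isAtom_iff g c).mpr hc, g.le_iff_le.mpr hca⟩
  have hcard : {b : WithTop (Set (Fin n)) | IsAtom b ∧ b ≤ g a}.ncard
      = {b : WithTop (Set (Fin n)) | IsAtom b ∧ b ≤ a}.ncard := by
    rw [hset, Set.ncard_image_of_injective _ g.injective]
  unfold fkn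
  by_cases h1 : a = ⊥ ∨ a = ((Set.univ : Set (Fin n)) : WithTop (Set (Fin n))) ∨ a = ⊤
  · rw [if_pos h1, if_pos (hcond.mpr h1)]; exact htop
  · have h1' : ¬(g a = ⊥ ∨ g a = ((Set.univ : Set (Fin n)) : WithTop (Set (Fin n))) ∨ g a = ⊤) :=
      fun h => h1 (hcond.mp h)
    rw [if_neg h1, if_neg h1', hcard]
    by_cases h2 : {b : WithTop (Set (Fin n)) | IsAtom b ∧ b ≤ a}.ncard ≤ k
    · simp only [if_pos h2]; exact htop
    · simp only [if_neg h2]; exact he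
end

section
/- Let n ≥ 3, let A be a Heyting subalgebra of A_n, and let b ∈ A_n with b ∉ A and b ≠ e. Then there exists an automorphism h of A_n such that h(b) ≠ b and h(a) = a for every a ∈ A. -/
/-- Order isomorphism of the powerset induced by a permutation. -/
noncomputable def permSetIso {α : Type*} (σ : α ≃ α) : Set α ≃o Set α where
  toFun t := σ '' t
  invFun t := σ.symm '' t
  left_inv t := by simp [Set.image_image]
  right_inv t := by simp [Set.image_image]
  map_rel_iff' {a b} := Set.image_subset_image_iff σ.injective

private lemma biInter_mem {n : ℕ} {S : Set (WithTop (Set (Fin n)))}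
    (hinf : ∀ a ∈ S, ∀ b ∈ S, a ⊓ b ∈ S) {ι : Type*} [DecidableEq ι] {J : Finset ι}
    (hJ : J.Nonempty) {f : ι → Set (Fin n)}
    (hf : ∀ j ∈ J, (↑(f j) : WithTop (Set (Fin n))) ∈ S) :
    (↑(⋂ j ∈ J, f j) : WithTop (Set (Fin n))) ∈ S := by
  induction hJ using Finset.Nonempty.cons_induction with
  | singleton a => simpa using hf a (by simp)
  | cons a J h hJ ih =>
    have h1 : (↑(f a) : WithTop (Set (Fin n))) ∈ S := hf a (by simp)
    have h2 := ih (fun j hj => hf j (by simp [hj]))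
    have : (⋂ j ∈ Finset.cons a J h, f j) = f a ⊓ ⋂ j ∈ J, f j := by
      rw [Finset.cons_eq_insert, Finset.set_biInter_insert]; rfl
    rw [this, WithTop.coe_inf]
    exact hinf _ h1 _ h2

private lemma biUnion_mem {n : ℕ} {S : Set (WithTop (Set (Fin n)))}
    (hsup : ∀ a ∈ S, ∀ b ∈ S, a ⊔ b ∈ S) {ι : Type*} [DecidableEq ι] {J : Finset ι}
    (hJ : J.Nonempty) {f : ι → Set (Fin n)}
    (hf : ∀ j ∈ J, (↑(f j) : WithTop (Set (Fin n))) ∈ S) :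
    (↑(⋃ j ∈ J, f j) : WithTop (Set (Fin n))) ∈ S := by
  induction hJ using Finset.Nonempty.cons_induction with
  | singleton a => simpa using hf a (by simp)
  | cons a J h hJ ih =>
    have h1 : (↑(f a) : WithTop (Set (Fin n))) ∈ S := hf a (by simp)
    have h2 := ih (fun j hj => hf j (by simp [hj]))
    have : (⋃ j ∈ Finset.cons a J h, f j) = f a ⊔ ⋃ j ∈ J, f j := by
      rw [Finset.cons_eq_insert, Finset.set_biUnion_insert]; rfl
    rw [this, WithTop.coe_sup]
    exact hsup _ h1 _ h2


/-- Let `n ≥ 3`, let `S` be (the universe of) a Heyting subalgebra of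
`A_n = WithTop (Set (Fin n))` (with Heyting implication `hi`, characterized by its
adjunction), and let `b ∈ A_n` with `b ∉ S` and `b ≠ e`, where `e = Set.univ` is the
second largest element. Then there is an automorphism `h` of `A_n` with `h b ≠ b`
and `h a = a` for every `a ∈ S`. -/
theorem stmt_16 (n : ℕ) (hn : 3 ≤ n)
    (hi : WithTop (Set (Fin n)) → WithTop (Set (Fin n)) → WithTop (Set (Fin n)))
    (adj : ∀ a b c : WithTop (Set (Fin n)), c ⊓ a ≤ b ↔ c ≤ hi a b)
    (S : Set (WithTop (Set (Fin n))))
    (hbot : ⊥ ∈ S) (htop : ⊤ ∈ S)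
    (hinf : ∀ a ∈ S, ∀ b ∈ S, a ⊓ b ∈ S)
    (hsup : ∀ a ∈ S, ∀ b ∈ S, a ⊔ b ∈ S)
    (hhi : ∀ a ∈ S, ∀ b ∈ S, hi a b ∈ S)
    (b : WithTop (Set (Fin n))) (hbS : b ∉ S)
    (hbe : b ≠ ((Set.univ : Set (Fin n)) : WithTop (Set (Fin n)))) :
    ∃ h : WithTop (Set (Fin n)) ≃o WithTop (Set (Fin n)),
      h b ≠ b ∧ ∀ a ∈ S, h a = a := by
  classical
  have hbotS : ((∅ : Set (Fin n)) : WithTop (Set (Fin n))) ∈ S := hbot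
  obtain ⟨s, rfl⟩ : ∃ s : Set (Fin n), b = (s : WithTop (Set (Fin n))) := by
    cases b with
    | top => exact absurd htop hbS
    | coe s => exact ⟨s, rfl⟩
  have hsne : s ≠ Set.univ := fun h => hbe (by rw [h])
  have hs0 : s.Nonempty := by
    rcases s.eq_empty_or_nonempty with h | h
    · exact absurd (h ▸ hbotS) hbS
    · exact h
  -- complements of nonempty members
  have hcompl : ∀ t : Set (Fin n), (↑t : WithTop (Set (Fin n))) ∈ S → t.Nonempty →
      (↑(tᶜ) : WithTop (Set (Fin n))) ∈ S := by
    intro t ht hne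
    have key : hi (↑t) ⊥ = ↑(tᶜ) := by
      apply le_antisymm
      · have h1 : hi (↑t) ⊥ ⊓ (↑t : WithTop (Set (Fin n))) ≤ ⊥ := (adj _ _ _).mpr le_rfl
        cases hcb : hi (↑t) ⊥ with
        | top =>
          rw [hcb, top_inf_eq] at h1
          have : t ≤ (⊥ : Set (Fin n)) := by
            rw [← WithTop.coe_le_coe]; simpa using h1
          exact absurd (le_bot_iff.mp this) hne.ne_empty
        | coe u =>
          rw [hcb, ← WithTop.coe_inf] at h1
          rw [WithTop.coe_le_coe]
          have h2 : u ⊓ t ≤ (⊥ : Set (Fin n)) := by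
            rw [← WithTop.coe_le_coe]; simpa using h1
          intro x hx
          intro hxt
          exact h2 ⟨hx, hxt⟩
      · rw [← adj, ← WithTop.coe_inf]
        have : tᶜ ⊓ t = (⊥ : Set (Fin n)) := by
          ext x; simp
        rw [this, WithTop.coe_bot]
    have := hhi _ ht _ hbot
    rwa [key] at this
  by_cases hcase : ∃ i ∈ s, ∃ j, j ∉ s ∧
      ∀ t : Set (Fin n), (↑t : WithTop (Set (Fin n))) ∈ S → (i ∈ t ↔ j ∈ t)
  · -- inseparable pair: swap it
    obtain ⟨i, his, j, hjs, hij⟩ := hcase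
    have hne : i ≠ j := fun h => hjs (h ▸ his)
    set σ := Equiv.swap i j with hσ
    have hfix : ∀ t : Set (Fin n), (↑t : WithTop (Set (Fin n))) ∈ S → σ '' t = t := by
      intro t ht
      have hIff := hij t ht
      rw [Equiv.image_eq_preimage_symm, hσ, Equiv.symm_swap]
      ext k
      simp only [Set.mem_preimage]
      by_cases hk : k = i
      · subst hk; rw [Equiv.swap_apply_left]; exact hIff.symm
      · by_cases hk' : k = j
        · subst hk'; rw [Equiv.swap_apply_right]; exact hIff
        · rw [Equiv.swap_apply_of_ne_of_ne hk hk']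
    refine ⟨(permSetIso σ).withTopCongr, ?_, ?_⟩
    · intro hEq
      have h2 : σ '' s = s := WithTop.coe_inj.mp hEq
      have : j ∈ σ '' s := ⟨i, his, Equiv.swap_apply_left i j⟩
      rw [h2] at this
      exact hjs this
    · intro a haS
      cases a with
      | top => rfl
      | coe t =>
        show ((σ '' t : Set (Fin n)) : WithTop (Set (Fin n))) = ↑t
        rw [hfix t haS]
  · -- all pairs separable: s is in S, contradiction
    exfalso
    push_neg at hcase
    have sep : ∀ i j : Fin n, ∃ t : Set (Fin n), (↑t : WithTop (Set (Fin n))) ∈ S ∧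
        (i ∈ s → j ∉ s → i ∈ t ∧ j ∉ t) := by
      intro i j
      by_cases his : i ∈ s
      · by_cases hjs : j ∈ s
        · exact ⟨∅, hbotS, fun _ h => absurd hjs h⟩
        · obtain ⟨t, ht, hnet⟩ := hcase i his j hjs
          rcases hnet with ⟨hit, hjt⟩ | ⟨hit, hjt⟩
          · exact ⟨t, ht, fun _ _ => ⟨hit, hjt⟩⟩
          · exact ⟨tᶜ, hcompl t ht ⟨j, hjt⟩, fun _ _ => ⟨hit, by simp [hjt]⟩⟩
      · exact ⟨∅, hbotS, fun h => absurd h his⟩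
    choose a haS hsep using sep
    set I : Finset (Fin n) := s.toFinset with hIdef
    set J : Finset (Fin n) := (sᶜ).toFinset with hJdef
    have hI : I.Nonempty := by
      obtain ⟨x, hx⟩ := hs0
      exact ⟨x, by simp [hIdef, hx]⟩
    have hJ : J.Nonempty := by
      obtain ⟨x, hx⟩ := (Set.ne_univ_iff_exists_notMem s).mp hsne
      exact ⟨x, by simp [hJdef, hx]⟩
    have hEq : s = ⋃ i ∈ I, ⋂ j ∈ J, a i j := by
      ext x
      simp only [Set.mem_iUnion, Set.mem_iInter, hIdef, hJdef, Set.mem_toFinset,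
        Set.mem_compl_iff]
      constructor
      · intro hx
        exact ⟨x, hx, fun j hj => (hsep x j hx hj).1⟩
      · rintro ⟨i, hiI, hall⟩
        by_contra hx
        exact (hsep i x hiI hx).2 (hall x hx)
    apply hbS
    rw [hEq]
    exact biUnion_mem hsup hI (fun i hiI =>
      biInter_mem hinf hJ (fun j _ => haS i j))
end

section
/- Let n ≥ 3 and let A be a Heyting subalgebra of A_n with more than two elements. Then A contains the second largest element e of A_n, and e is also the second largest element of A. -/
/-- Let `n ≥ 3` and let `S` be (the universe of) a Heyting subalgebra
of `A_n = WithTop (Set (Fin n))` with more than two elements. Then `S` contains the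
second largest element `e = Set.univ` of `A_n`, and `e` is also the second largest
element of `S`. -/
theorem stmt_18 (n : ℕ) (hn : 3 ≤ n)
    (hi : WithTop (Set (Fin n)) → WithTop (Set (Fin n)) → WithTop (Set (Fin n)))
    (adj : ∀ a b c : WithTop (Set (Fin n)), c ⊓ a ≤ b ↔ c ≤ hi a b)
    (S : Set (WithTop (Set (Fin n))))
    (hbot : ⊥ ∈ S) (htop : ⊤ ∈ S)
    (hinf : ∀ a ∈ S, ∀ b ∈ S, a ⊓ b ∈ S)
    (hsup : ∀ a ∈ S, ∀ b ∈ S, a ⊔ b ∈ S)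
    (hhi : ∀ a ∈ S, ∀ b ∈ S, hi a b ∈ S)
    (hcard : 2 < S.ncard) :
    ((Set.univ : Set (Fin n)) : WithTop (Set (Fin n))) ∈ S ∧
    ((Set.univ : Set (Fin n)) : WithTop (Set (Fin n))) ≠ ⊤ ∧
    ∀ x ∈ S, x ≠ ⊤ → x ≤ ((Set.univ : Set (Fin n)) : WithTop (Set (Fin n))) := by
  -- find a nontrivial element of S
  obtain ⟨a, haS, hane⟩ : ∃ a ∈ S, a ≠ ⊥ ∧ a ≠ ⊤ := by
    by_contra h
    push_neg at h
    have hsub : S ⊆ ({⊥, ⊤} : Set (WithTop (Set (Fin n)))) := by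
      intro x hx
      rcases em (x = ⊥) with h1 | h1
      · exact Or.inl h1
      · exact Or.inr (h x hx h1)
    have : S.ncard ≤ ({⊥, ⊤} : Set (WithTop (Set (Fin n)))).ncard :=
      Set.ncard_le_ncard hsub (Set.toFinite _)
    have h2 : ({⊥, ⊤} : Set (WithTop (Set (Fin n)))).ncard ≤ 2 :=
      (Set.ncard_insert_le _ _).trans (by simp)
    omega
  obtain ⟨hane0, hane1⟩ := hane
  obtain ⟨s, rfl⟩ : ∃ s : Set (Fin n), a = (s : WithTop (Set (Fin n))) := by
    rcases a with _ | s
    · exact absurd rfl hane1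
    · exact ⟨s, rfl⟩
  -- compute the pseudo-complement of s
  have hneg : hi (s : WithTop (Set (Fin n))) ⊥ = ((sᶜ : Set (Fin n)) : WithTop (Set (Fin n))) := by
    have h1 : ((sᶜ : Set (Fin n)) : WithTop (Set (Fin n))) ≤ hi (s : WithTop (Set (Fin n))) ⊥ := by
      rw [← adj]
      rw [← WithTop.coe_inf]
      simp [← WithTop.coe_bot]
    have h2 : hi (s : WithTop (Set (Fin n))) ⊥ ⊓ (s : WithTop (Set (Fin n))) ≤ ⊥ :=
      (adj _ _ _).2 le_rfl
    rcases (em (hi (s : WithTop (Set (Fin n))) ⊥ = ⊤)) with ht | ht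
    · rw [ht] at h2
      simp only [top_inf_eq, le_bot_iff] at h2
      exact absurd h2 hane0
    · obtain ⟨t, h3⟩ := WithTop.ne_top_iff_exists.1 ht
      rw [← h3] at h2 h1 ⊢
      rw [← WithTop.coe_inf, ← WithTop.coe_bot, WithTop.coe_le_coe] at h2
      refine le_antisymm (WithTop.coe_le_coe.2 ?_) h1
      intro x hx
      intro hxs
      exact h2 ⟨hx, hxs⟩
  have hnegS : ((sᶜ : Set (Fin n)) : WithTop (Set (Fin n))) ∈ S := by
    rw [← hneg]; exact hhi _ haS _ hbot
  have huniv : ((Set.univ : Set (Fin n)) : WithTop (Set (Fin n))) ∈ S := by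
    have := hsup _ haS _ hnegS
    rwa [← WithTop.coe_sup, sup_compl_eq_top] at this
  refine ⟨huniv, WithTop.coe_ne_top, ?_⟩
  intro x _ hx
  rcases x with _ | t
  · exact absurd rfl hx
  · exact WithTop.coe_le_coe.2 (Set.subset_univ t)
end
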